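/- arXiv:2411.13193 — 5 statements merged into one kernel-verified Lean document; each statement's English description precedes it below -/
import Mathlib

section
/- No element of the interval poset of a permutation covers exactly 3 elements. Equivalently: if an interval I of a permutation π of [n] has exactly three maximal proper subintervals I₁, I₂, I₃ partitioning I (each a nonempty interval of π, pairwise disjoint, with union I), this is impossible; i.e., every interval of π partitions into a number of maximal proper subintervals different from 3. -/
/-- A set of values in `Fin n` is consecutive if it is closed under betweenness. -/
def Consec {n : ℕ} (S : Finset (Fin n)) : Prop :=
  ∀ ⦃x y z : Fin n⦄, x ∈ S → z ∈ S → x ≤ y → y ≤ z → y ∈ S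

/-- `I` is an interval of the permutation `π` if both `I` and its preimage under `π`
are sets of consecutive integers. -/
def IsInterval {n : ℕ} (π : Equiv.Perm (Fin n)) (I : Finset (Fin n)) : Prop :=
  Consec I ∧ Consec (I.image π.symm)

/-- The 1-based integer interval `[a,b]` viewed inside `Fin n`
(the element `x : Fin n` represents the value `x.val + 1`). -/
def ivl (n a b : ℕ) : Finset (Fin n) :=
  Finset.univ.filter (fun x => a ≤ x.val + 1 ∧ x.val + 1 ≤ b)

/-- The interval I covers the interval J in the interval poset of π. -/
def IntervalCover {n : ℕ} (π : Equiv.Perm (Fin n)) (I J : Finset (Fin n)) : Prop :=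
  IsInterval π I ∧ I.Nonempty ∧ IsInterval π J ∧ J.Nonempty ∧ J ⊂ I ∧
    ¬ ∃ K : Finset (Fin n), IsInterval π K ∧ K.Nonempty ∧ J ⊂ K ∧ K ⊂ I

lemma consec_of_low {n : ℕ} {U D S : Finset (Fin n)} (hD : Consec D) (hU : Consec U)
    (hSU : S ⊆ U) (hUDS : U ⊆ D ∪ S) (hdisj : Disjoint D S) {d : Fin n} (hd : d ∈ D)
    (hlow : ∀ x ∈ S, d ≤ x) : Consec S := by
  intro x y z hx hz hxy hyz
  have hyU : y ∈ U := hU (hSU hx) (hSU hz) hxy hyz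
  rcases Finset.mem_union.1 (hUDS hyU) with hyD | hyS
  · exact absurd (hD hd hyD (hlow x hx) hxy) (fun hxD => Finset.disjoint_left.1 hdisj hxD hx)
  · exact hyS

lemma consec_of_high {n : ℕ} {U D S : Finset (Fin n)} (hD : Consec D) (hU : Consec U)
    (hSU : S ⊆ U) (hUDS : U ⊆ D ∪ S) (hdisj : Disjoint D S) {d : Fin n} (hd : d ∈ D)
    (hhigh : ∀ x ∈ S, x ≤ d) : Consec S := by
  intro x y z hx hz hxy hyz
  have hyU : y ∈ U := hU (hSU hx) (hSU hz) hxy hyz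
  rcases Finset.mem_union.1 (hUDS hyU) with hyD | hyS
  · exact absurd (hD hyD hd hyz (hhigh z hz)) (fun hzD => Finset.disjoint_left.1 hdisj hzD hz)
  · exact hyS

lemma max_le_of_min_le {n : ℕ} {A C : Finset (Fin n)} (hA : Consec A) (hAne : A.Nonempty)
    (hCne : C.Nonempty) (hd : Disjoint A C) (h : A.min' hAne ≤ C.min' hCne) :
    A.max' hAne ≤ C.max' hCne := by
  by_contra h'
  push_neg at h'
  have hc : C.min' hCne ∈ A :=
    hA (A.min'_mem hAne) (A.max'_mem hAne) h ((C.min'_le _ (C.max'_mem hCne)).trans h'.le)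
  exact Finset.disjoint_left.1 hd hc (C.min'_mem hCne)

lemma middle_lemma {n : ℕ} {U A B C : Finset (Fin n)} (hA : Consec A) (hB : Consec B)
    (hC : Consec C) (hAne : A.Nonempty) (hBne : B.Nonempty) (hCne : C.Nonempty)
    (hAB : Disjoint A B) (hAC : Disjoint A C) (hBC : Disjoint B C)
    (hU : Consec U) (hsub : A ∪ B ∪ C ⊆ U) (hsup : U ⊆ A ∪ B ∪ C)
    (h1 : A.min' hAne ≤ B.min' hBne) (h2 : B.min' hBne ≤ C.min' hCne) :
    Consec (A ∪ B) ∧ Consec (B ∪ C) := by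
  constructor
  · refine consec_of_high (D := C) (S := A ∪ B) hC hU
      (fun x hx => hsub (by simp only [Finset.mem_union] at hx ⊢; tauto))
      (fun x hx => by have := hsup hx; simp only [Finset.mem_union] at this ⊢; tauto)
      (Finset.disjoint_union_right.2 ⟨hAC.symm, hBC.symm⟩) (C.max'_mem hCne) ?_
    intro x hx
    rcases Finset.mem_union.1 hx with h | h
    · exact (Finset.le_max' A x h).trans (max_le_of_min_le hA hAne hCne hAC (h1.trans h2))
    · exact (Finset.le_max' B x h).trans (max_le_of_min_le hB hBne hCne hBC h2)
  · refine consec_of_low (D := A) (S := B ∪ C) hA hU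
      (fun x hx => hsub (by simp only [Finset.mem_union] at hx ⊢; tauto))
      (fun x hx => by have := hsup hx; simp only [Finset.mem_union] at this ⊢; tauto)
      (Finset.disjoint_union_right.2 ⟨hAB, hAC⟩) (A.min'_mem hAne) ?_
    intro x hx
    rcases Finset.mem_union.1 hx with h | h
    · exact h1.trans (Finset.min'_le B x h)
    · exact (h1.trans h2).trans (Finset.min'_le C x h)

lemma two_pairs {n : ℕ} {A B C : Finset (Fin n)} (hA : Consec A) (hB : Consec B)
    (hC : Consec C) (hAne : A.Nonempty) (hBne : B.Nonempty) (hCne : C.Nonempty)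
    (hAB : Disjoint A B) (hAC : Disjoint A C) (hBC : Disjoint B C)
    (hU : Consec (A ∪ B ∪ C)) :
    (Consec (A ∪ B) ∧ Consec (A ∪ C)) ∨ (Consec (A ∪ B) ∧ Consec (B ∪ C)) ∨
      (Consec (A ∪ C) ∧ Consec (B ∪ C)) := by
  rcases le_total (A.min' hAne) (B.min' hBne) with h1 | h1 <;>
    rcases le_total (B.min' hBne) (C.min' hCne) with h2 | h2 <;>
    rcases le_total (A.min' hAne) (C.min' hCne) with h3 | h3
  -- case A ≤ B ≤ C (twice, h3 either way)
  case inl.inl.inl =>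
    obtain ⟨p, q⟩ := middle_lemma hA hB hC hAne hBne hCne hAB hAC hBC hU
      (Finset.Subset.refl _) (Finset.Subset.refl _) h1 h2
    exact Or.inr (Or.inl ⟨p, q⟩)
  case inl.inl.inr =>
    obtain ⟨p, q⟩ := middle_lemma hA hB hC hAne hBne hCne hAB hAC hBC hU
      (Finset.Subset.refl _) (Finset.Subset.refl _) h1 h2
    exact Or.inr (Or.inl ⟨p, q⟩)
  -- case A ≤ C ≤ B : triple (A,C,B)
  case inl.inr.inl =>
    obtain ⟨p, q⟩ := middle_lemma (U := A ∪ B ∪ C) hA hC hB hAne hCne hBne hAC hAB hBC.symm hU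
      (fun x hx => by simp only [Finset.mem_union] at hx ⊢; tauto)
      (fun x hx => by simp only [Finset.mem_union] at hx ⊢; tauto) h3 h2
    rw [Finset.union_comm C B] at q
    exact Or.inr (Or.inr ⟨p, q⟩)
  -- case C ≤ A ≤ B : triple (C,A,B)
  case inl.inr.inr =>
    obtain ⟨p, q⟩ := middle_lemma (U := A ∪ B ∪ C) hC hA hB hCne hAne hBne hAC.symm hBC.symm hAB hU
      (fun x hx => by simp only [Finset.mem_union] at hx ⊢; tauto)
      (fun x hx => by simp only [Finset.mem_union] at hx ⊢; tauto) h3 h1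
    rw [Finset.union_comm C A] at p
    exact Or.inl ⟨q, p⟩
  -- case B ≤ A ≤ C : triple (B,A,C)
  case inr.inl.inl =>
    obtain ⟨p, q⟩ := middle_lemma (U := A ∪ B ∪ C) hB hA hC hBne hAne hCne hAB.symm hBC hAC hU
      (fun x hx => by simp only [Finset.mem_union] at hx ⊢; tauto)
      (fun x hx => by simp only [Finset.mem_union] at hx ⊢; tauto) h1 h3
    rw [Finset.union_comm B A] at p
    exact Or.inl ⟨p, q⟩
  -- case B ≤ C ≤ A : triple (B,C,A)
  case inr.inl.inr =>
    obtain ⟨p, q⟩ := middle_lemma (U := A ∪ B ∪ C) hB hC hA hBne hCne hAne hBC hAB.symm hAC.symm hU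
      (fun x hx => by simp only [Finset.mem_union] at hx ⊢; tauto)
      (fun x hx => by simp only [Finset.mem_union] at hx ⊢; tauto) h2 h3
    rw [Finset.union_comm C A] at q
    exact Or.inr (Or.inr ⟨q, p⟩)
  -- case C ≤ B ≤ A : triple (C,B,A) (twice)
  case inr.inr.inl =>
    obtain ⟨p, q⟩ := middle_lemma (U := A ∪ B ∪ C) hC hB hA hCne hBne hAne hBC.symm hAC.symm hAB.symm hU
      (fun x hx => by simp only [Finset.mem_union] at hx ⊢; tauto)
      (fun x hx => by simp only [Finset.mem_union] at hx ⊢; tauto) h2 h1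
    rw [Finset.union_comm C B] at p
    rw [Finset.union_comm B A] at q
    exact Or.inr (Or.inl ⟨q, p⟩)
  case inr.inr.inr =>
    obtain ⟨p, q⟩ := middle_lemma (U := A ∪ B ∪ C) hC hB hA hCne hBne hAne hBC.symm hAC.symm hAB.symm hU
      (fun x hx => by simp only [Finset.mem_union] at hx ⊢; tauto)
      (fun x hx => by simp only [Finset.mem_union] at hx ⊢; tauto) h2 h1
    rw [Finset.union_comm C B] at p
    rw [Finset.union_comm B A] at q
    exact Or.inr (Or.inl ⟨q, p⟩)

lemma no_pair {n : ℕ} (π : Equiv.Perm (Fin n)) {I X Y Z : Finset (Fin n)}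
    (hXY : Disjoint X Y) (hXZ : Disjoint X Z) (hYZ : Disjoint Y Z)
    (hYne : Y.Nonempty) (hZne : Z.Nonempty)
    (hXI : IntervalCover π I X) (hU : X ∪ Y ∪ Z = I)
    (h1 : Consec (X ∪ Y)) (h2 : Consec ((X ∪ Y).image π.symm)) : False := by
  obtain ⟨hIint, hIne, hXint, hXne, hXsub, hmax⟩ := hXI
  apply hmax
  refine ⟨X ∪ Y, ⟨h1, h2⟩, hXne.mono Finset.subset_union_left, ?_, ?_⟩
  · rw [Finset.ssubset_def]
    refine ⟨Finset.subset_union_left, fun hsub => ?_⟩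
    obtain ⟨y, hy⟩ := hYne
    exact Finset.disjoint_left.1 hXY (hsub (Finset.mem_union_right _ hy)) hy
  · rw [Finset.ssubset_def]
    constructor
    · rw [← hU]; exact Finset.subset_union_left
    · intro hsub
      obtain ⟨z, hz⟩ := hZne
      have hzI : z ∈ I := by rw [← hU]; exact Finset.mem_union_right _ hz
      rcases Finset.mem_union.1 (hsub hzI) with h | h
      exacts [Finset.disjoint_left.1 hXZ h hz, Finset.disjoint_left.1 hYZ h hz]

/-- no interval of a permutation has exactly three maximal proper
subintervals partitioning it; i.e., no element of the interval poset covers exactly 3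
elements. -/
theorem no_cover_three {n : ℕ} (π : Equiv.Perm (Fin n)) :
    ¬ ∃ I I₁ I₂ I₃ : Finset (Fin n),
      IsInterval π I ∧ I.Nonempty ∧
      I₁ ≠ I₂ ∧ I₁ ≠ I₃ ∧ I₂ ≠ I₃ ∧
      IntervalCover π I I₁ ∧ IntervalCover π I I₂ ∧ IntervalCover π I I₃ ∧
      Disjoint I₁ I₂ ∧ Disjoint I₁ I₃ ∧ Disjoint I₂ I₃ ∧
      I₁ ∪ I₂ ∪ I₃ = I := by
  rintro ⟨I, A, B, C, hI, hIne, -, -, -, hcA, hcB, hcC, hAB, hAC, hBC, hUn⟩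
  have hAint : IsInterval π A := hcA.2.2.1
  have hBint : IsInterval π B := hcB.2.2.1
  have hCint : IsInterval π C := hcC.2.2.1
  have hAne : A.Nonempty := hcA.2.2.2.1
  have hBne : B.Nonempty := hcB.2.2.2.1
  have hCne : C.Nonempty := hcC.2.2.2.1
  -- value side
  have hUv : Consec (A ∪ B ∪ C) := by rw [hUn]; exact hI.1
  have hv := two_pairs hAint.1 hBint.1 hCint.1 hAne hBne hCne hAB hAC hBC hUv
  -- position side
  have hinj : Function.Injective (π.symm : Fin n → Fin n) := π.symm.injective
  have hUp : Consec (A.image π.symm ∪ B.image π.symm ∪ C.image π.symm) := by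
    rw [← Finset.image_union, ← Finset.image_union, hUn]; exact hI.2
  have hp := two_pairs hAint.2 hBint.2 hCint.2 (hAne.image _) (hBne.image _) (hCne.image _)
    ((Finset.disjoint_image hinj).2 hAB) ((Finset.disjoint_image hinj).2 hAC)
    ((Finset.disjoint_image hinj).2 hBC) hUp
  -- translate position pairs
  rw [← Finset.image_union, ← Finset.image_union, ← Finset.image_union] at hp
  -- unions in different orders
  have hU2 : A ∪ C ∪ B = I := by rw [← hUn]; ext x; simp only [Finset.mem_union]; tauto
  have hU3 : B ∪ C ∪ A = I := by rw [← hUn]; ext x; simp only [Finset.mem_union]; tauto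
  rcases hv with ⟨v1, v2⟩ | ⟨v1, v2⟩ | ⟨v1, v2⟩ <;>
    rcases hp with ⟨p1, p2⟩ | ⟨p1, p2⟩ | ⟨p1, p2⟩
  · exact no_pair π hAB hAC hBC hBne hCne hcA hUn v1 p1
  · exact no_pair π hAB hAC hBC hBne hCne hcA hUn v1 p1
  · exact no_pair π hAC hAB hBC.symm hCne hBne hcA hU2 v2 p1
  · exact no_pair π hAB hAC hBC hBne hCne hcA hUn v1 p1
  · exact no_pair π hAB hAC hBC hBne hCne hcA hUn v1 p1
  · exact no_pair π hBC hAB.symm hAC.symm hCne hAne hcB hU3 v2 p2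
  · exact no_pair π hAC hAB hBC.symm hCne hBne hcA hU2 v1 p2
  · exact no_pair π hBC hAB.symm hAC.symm hCne hAne hcB hU3 v2 p2
  · exact no_pair π hAC hAB hBC.symm hCne hBne hcA hU2 v1 p1
end

section
/- For any permutation π of [n], if [a,c] and [b,d] are intervals of π with a < b ≤ c < d, then [a,d], [b,c], [a,b-1] and [c+1,d] are also intervals of π. -/
lemma consec_ivl (n a b : ℕ) : Consec (ivl n a b) := by
  intro x y z hx hz hxy hyz
  simp only [ivl, Finset.mem_filter, Finset.mem_univ, true_and] at *
  have h1 : x.val ≤ y.val := hxy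
  have h2 : y.val ≤ z.val := hyz
  omega

lemma consec_inter {n : ℕ} {S T : Finset (Fin n)} (hS : Consec S) (hT : Consec T) :
    Consec (S ∩ T) := by
  intro x y z hx hz hxy hyz
  simp only [Finset.mem_inter] at *
  exact ⟨hS hx.1 hz.1 hxy hyz, hT hx.2 hz.2 hxy hyz⟩

lemma consec_union {n : ℕ} {S T : Finset (Fin n)} (hS : Consec S) (hT : Consec T)
    (hw : (S ∩ T).Nonempty) : Consec (S ∪ T) := by
  obtain ⟨w, hw⟩ := hw
  rw [Finset.mem_inter] at hw
  intro x y z hx hz hxy hyz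
  simp only [Finset.mem_union] at hx hz ⊢
  rcases hx with hx | hx <;> rcases hz with hz | hz
  · exact Or.inl (hS hx hz hxy hyz)
  · rcases le_total y w with h | h
    · exact Or.inl (hS hx hw.1 hxy h)
    · exact Or.inr (hT hw.2 hz h hyz)
  · rcases le_total y w with h | h
    · exact Or.inr (hT hx hw.2 hxy h)
    · exact Or.inl (hS hw.1 hz h hyz)
  · exact Or.inr (hT hx hz hxy hyz)

lemma consec_sdiff {n : ℕ} {S T : Finset (Fin n)} (hS : Consec S) (hT : Consec T)
    (hw : (T \ S).Nonempty) : Consec (S \ T) := by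
  obtain ⟨w, hw⟩ := hw
  rw [Finset.mem_sdiff] at hw
  intro x y z hx hz hxy hyz
  rw [Finset.mem_sdiff] at hx hz ⊢
  refine ⟨hS hx.1 hz.1 hxy hyz, fun hyT => ?_⟩
  rcases le_total w x with h | h
  · exact hx.2 (hT hw.1 hyT h hxy)
  · rcases le_total w z with h' | h'
    · exact hw.2 (hS hx.1 hz.1 h h')
    · exact hz.2 (hT hyT hw.1 hyz h')

/-- if [a,c] and [b,d] are intervals of π with a < b ≤ c < d, then
[a,d], [b,c], [a,b-1] and [c+1,d] are also intervals of π. -/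
theorem intersecting_intervals {n a b c d : ℕ} (π : Equiv.Perm (Fin n))
    (ha : 1 ≤ a) (hab : a < b) (hbc : b ≤ c) (hcd : c < d) (hd : d ≤ n)
    (hac : IsInterval π (ivl n a c)) (hbd : IsInterval π (ivl n b d)) :
    IsInterval π (ivl n a d) ∧ IsInterval π (ivl n b c) ∧
      IsInterval π (ivl n a (b - 1)) ∧ IsInterval π (ivl n (c + 1) d) := by
  have hinj := π.symm.injective
  -- set identities
  have hUnion : ivl n a d = ivl n a c ∪ ivl n b d := by
    ext x; simp only [ivl, Finset.mem_union, Finset.mem_filter, Finset.mem_univ, true_and]; omega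
  have hInter : ivl n b c = ivl n a c ∩ ivl n b d := by
    ext x; simp only [ivl, Finset.mem_inter, Finset.mem_filter, Finset.mem_univ, true_and]; omega
  have hSdiff1 : ivl n a (b - 1) = ivl n a c \ ivl n b d := by
    ext x; simp only [ivl, Finset.mem_sdiff, Finset.mem_filter, Finset.mem_univ, true_and]; omega
  have hSdiff2 : ivl n (c + 1) d = ivl n b d \ ivl n a c := by
    ext x; simp only [ivl, Finset.mem_sdiff, Finset.mem_filter, Finset.mem_univ, true_and]; omega
  -- nonemptiness witnesses
  have hne1 : (ivl n a c ∩ ivl n b d).Nonempty := by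
    refine ⟨⟨b - 1, by omega⟩, ?_⟩
    simp only [ivl, Finset.mem_inter, Finset.mem_filter, Finset.mem_univ, true_and]; omega
  have hne2 : (ivl n b d \ ivl n a c).Nonempty := by
    refine ⟨⟨d - 1, by omega⟩, ?_⟩
    simp only [ivl, Finset.mem_sdiff, Finset.mem_filter, Finset.mem_univ, true_and]; omega
  have hne3 : (ivl n a c \ ivl n b d).Nonempty := by
    refine ⟨⟨a - 1, by omega⟩, ?_⟩
    simp only [ivl, Finset.mem_sdiff, Finset.mem_filter, Finset.mem_univ, true_and]; omega
  obtain ⟨_, hA⟩ := hac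
  obtain ⟨_, hB⟩ := hbd
  have himg_inter : (ivl n a c ∩ ivl n b d).image π.symm
      = (ivl n a c).image π.symm ∩ (ivl n b d).image π.symm :=
    Finset.image_inter _ _ hinj
  have hne1' : ((ivl n a c).image π.symm ∩ (ivl n b d).image π.symm).Nonempty := by
    rw [← himg_inter]; exact hne1.image _
  refine ⟨⟨consec_ivl n a d, ?_⟩, ⟨consec_ivl n b c, ?_⟩,
    ⟨consec_ivl n a (b-1), ?_⟩, ⟨consec_ivl n (c+1) d, ?_⟩⟩
  · rw [hUnion, Finset.image_union]
    exact consec_union hA hB hne1'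
  · rw [hInter, himg_inter]
    exact consec_inter hA hB
  · rw [hSdiff1, Finset.image_sdiff _ _ hinj]
    refine consec_sdiff hA hB ?_
    rw [← Finset.image_sdiff _ _ hinj]
    exact hne2.image _
  · rw [hSdiff2, Finset.image_sdiff _ _ hinj]
    refine consec_sdiff hB hA ?_
    rw [← Finset.image_sdiff _ _ hinj]
    exact hne3.image _
end

section
/- The map sending each non-singleton interval [a,b] of a permutation π of [n] to the chord (a, b+1) of a convex (n+1)-gon produces a diagonally framed dissection: for any two crossing diagonals (a,c+1) and (b,d+1) with a < b ≤ c < d arising from intervals of π, the four chords (a,d+1), (b,c+1), (a,b), (c+1,d+1) also arise from intervals of π (or are outer edges, i.e., join consecutive vertices). -/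
/-- Outer edge of the convex m-gon with vertices 1,...,m. -/
def OuterEdge (m : ℕ) (p : ℕ × ℕ) : Prop :=
  (1 ≤ p.1 ∧ p.2 = p.1 + 1 ∧ p.2 ≤ m) ∨ (p.1 = 1 ∧ p.2 = m)

/-- A (non-degenerate) diagonal of the convex m-gon with vertices 1,...,m. -/
def IsDiag (m : ℕ) (p : ℕ × ℕ) : Prop :=
  1 ≤ p.1 ∧ p.1 + 1 < p.2 ∧ p.2 ≤ m ∧ ¬ (p.1 = 1 ∧ p.2 = m)

/-- A dissection of the convex m-gon: a set of diagonals. -/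
def Dissection (m : ℕ) (D : Set (ℕ × ℕ)) : Prop :=
  ∀ p ∈ D, IsDiag m p

/-- Two chords of a convex polygon cross iff their endpoints interleave. -/
def Cross (p q : ℕ × ℕ) : Prop :=
  (p.1 < q.1 ∧ q.1 < p.2 ∧ p.2 < q.2) ∨ (q.1 < p.1 ∧ p.1 < q.2 ∧ q.2 < p.2)

/-- A chord is an edge of the graph of the dissection: a diagonal of D or an outer edge. -/
def EdgeOf (m : ℕ) (D : Set (ℕ × ℕ)) (p : ℕ × ℕ) : Prop :=
  p ∈ D ∨ OuterEdge m p

/-- Vertices u and v are joined by an edge of the graph of the dissection. -/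
def EdgeBtw (m : ℕ) (D : Set (ℕ × ℕ)) (u v : ℕ) : Prop :=
  EdgeOf m D (min u v, max u v)

/-- A dissection is diagonally framed if the four sides of every pair of crossing
diagonals are edges of the graph of the dissection. -/
def DiagFramed (m : ℕ) (D : Set (ℕ × ℕ)) : Prop :=
  ∀ a b c d : ℕ, a < b → b < c → c < d → (a, c) ∈ D → (b, d) ∈ D →
    EdgeOf m D (a, b) ∧ EdgeOf m D (b, c) ∧ EdgeOf m D (c, d) ∧ EdgeOf m D (a, d)

/-- The chord (a,b) of the convex (n+1)-gon arises from the interval [a,b-1] of π, or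
is an outer edge. -/
def ChordArises (n : ℕ) (π : Equiv.Perm (Fin n)) (a b : ℕ) : Prop :=
  IsInterval π (ivl n a (b - 1)) ∨ OuterEdge (n + 1) (a, b)

lemma consec_inter_s6 {n : ℕ} {A B : Finset (Fin n)} (hA : Consec A) (hB : Consec B) :
    Consec (A ∩ B) := by
  intro x y z hx hz hxy hyz
  simp only [Finset.mem_inter] at *
  exact ⟨hA hx.1 hz.1 hxy hyz, hB hx.2 hz.2 hxy hyz⟩

lemma consec_union_s6 {n : ℕ} {A B : Finset (Fin n)} (hA : Consec A) (hB : Consec B)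
    (h : (A ∩ B).Nonempty) : Consec (A ∪ B) := by
  obtain ⟨w, hw⟩ := h
  simp only [Finset.mem_inter] at hw
  intro x y z hx hz hxy hyz
  simp only [Finset.mem_union] at *
  rcases hx with hx | hx <;> rcases hz with hz | hz
  · exact Or.inl (hA hx hz hxy hyz)
  · rcases le_total y w with h' | h'
    · exact Or.inl (hA hx hw.1 hxy h')
    · exact Or.inr (hB hw.2 hz h' hyz)
  · rcases le_total y w with h' | h'
    · exact Or.inr (hB hx hw.2 hxy h')
    · exact Or.inl (hA hw.1 hz h' hyz)
  · exact Or.inr (hB hx hz hxy hyz)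

lemma consec_sdiff_s6 {n : ℕ} {A B : Finset (Fin n)} (hA : Consec A) (hB : Consec B)
    (h : (B \ A).Nonempty) : Consec (A \ B) := by
  obtain ⟨w, hw⟩ := h
  simp only [Finset.mem_sdiff] at hw
  intro x y z hx hz hxy hyz
  simp only [Finset.mem_sdiff] at *
  refine ⟨hA hx.1 hz.1 hxy hyz, fun hyB => ?_⟩
  rcases le_total w y with h' | h'
  · rcases le_total w x with h'' | h''
    · exact hx.2 (hB hw.1 hyB h'' hxy)
    · exact hw.2 (hA hx.1 hz.1 h'' (h'.trans hyz))
  · rcases le_total z w with h'' | h''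
    · exact hz.2 (hB hyB hw.1 hyz h'')
    · exact hw.2 (hA hx.1 hz.1 (hxy.trans h') h'')

/-- the dissection obtained from the intervals of π is diagonally framed:
for crossing diagonals (a,c+1), (b,d+1) coming from intervals [a,c], [b,d] of π with
a < b ≤ c < d, the four framing chords (a,d+1), (b,c+1), (a,b), (c+1,d+1) also arise
from intervals of π or are outer edges. -/
theorem phi_diagonally_framed {n a b c d : ℕ} (π : Equiv.Perm (Fin n))
    (ha : 1 ≤ a) (hab : a < b) (hbc : b ≤ c) (hcd : c < d) (hd : d ≤ n)
    (hac : IsInterval π (ivl n a c)) (hbd : IsInterval π (ivl n b d)) :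
    ChordArises n π a (d + 1) ∧ ChordArises n π b (c + 1) ∧
      ChordArises n π a b ∧ ChordArises n π (c + 1) (d + 1) := by
  set σ := π.symm with hσ
  obtain ⟨hI1, hI2⟩ := hac
  obtain ⟨hJ1, hJ2⟩ := hbd
  -- set identities
  have hu : ivl n a d = ivl n a c ∪ ivl n b d := by
    ext x
    simp only [ivl, Finset.mem_filter, Finset.mem_univ, true_and, Finset.mem_union]
    omega
  have hi : ivl n b c = ivl n a c ∩ ivl n b d := by
    ext x
    simp only [ivl, Finset.mem_filter, Finset.mem_univ, true_and, Finset.mem_inter]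
    omega
  have hd1 : ivl n a (b - 1) = ivl n a c \ ivl n b d := by
    ext x
    simp only [ivl, Finset.mem_filter, Finset.mem_univ, true_and, Finset.mem_sdiff]
    omega
  have hd2 : ivl n (c + 1) d = ivl n b d \ ivl n a c := by
    ext x
    simp only [ivl, Finset.mem_filter, Finset.mem_univ, true_and, Finset.mem_sdiff]
    omega
  -- nonemptiness of intersection and the two differences
  have hne_i : ((ivl n a c).image σ ∩ (ivl n b d).image σ).Nonempty := by
    rw [← Finset.image_inter _ _ σ.injective, ← hi]
    refine ⟨σ ⟨b - 1, by omega⟩, Finset.mem_image_of_mem _ ?_⟩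
    simp only [ivl, Finset.mem_filter, Finset.mem_univ, true_and]; omega
  have hne_d1 : ((ivl n a c).image σ \ (ivl n b d).image σ).Nonempty := by
    rw [← Finset.image_sdiff _ _ σ.injective, ← hd1]
    refine ⟨σ ⟨a - 1, by omega⟩, Finset.mem_image_of_mem _ ?_⟩
    simp only [ivl, Finset.mem_filter, Finset.mem_univ, true_and]; omega
  have hne_d2 : ((ivl n b d).image σ \ (ivl n a c).image σ).Nonempty := by
    rw [← Finset.image_sdiff _ _ σ.injective, ← hd2]
    refine ⟨σ ⟨d - 1, by omega⟩, Finset.mem_image_of_mem _ ?_⟩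
    simp only [ivl, Finset.mem_filter, Finset.mem_univ, true_and]; omega
  refine ⟨Or.inl ⟨?_, ?_⟩, Or.inl ⟨?_, ?_⟩, Or.inl ⟨?_, ?_⟩, Or.inl ⟨?_, ?_⟩⟩
  · exact consec_ivl n a (d + 1 - 1)
  · have : d + 1 - 1 = d := rfl
    rw [this, hu, Finset.image_union]
    exact consec_union_s6 hI2 hJ2 hne_i
  · exact consec_ivl n b (c + 1 - 1)
  · have : c + 1 - 1 = c := rfl
    rw [this, hi, Finset.image_inter _ _ σ.injective]
    exact consec_inter_s6 hI2 hJ2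
  · exact consec_ivl n a (b - 1)
  · rw [hd1, Finset.image_sdiff _ _ σ.injective]
    exact consec_sdiff_s6 hI2 hJ2 hne_d2
  · exact consec_ivl n (c + 1) (d + 1 - 1)
  · have : d + 1 - 1 = d := rfl
    rw [this, hd2, Finset.image_sdiff _ _ σ.injective]
    exact consec_sdiff_s6 hJ2 hI2 hne_d1
end

section
/- Let a convex n-gon have a diagonally framed dissection D, and suppose the graph of the dissection contains a complete subgraph on vertex set V_k. If a diagonal (e,f) of D crosses some edge with both endpoints in V_k, then the graph of the dissection is complete on vertex set V_k ∪ {e, f}. -/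
lemma edgeBtw_symm {n : ℕ} {D : Set (ℕ × ℕ)} {u v : ℕ} (h : EdgeBtw n D u v) :
    EdgeBtw n D v u := by
  unfold EdgeBtw at *; rwa [min_comm, max_comm]

lemma edgeBtw_of_lt {n : ℕ} {D : Set (ℕ × ℕ)} {a b : ℕ} (h : a < b)
    (h2 : EdgeOf n D (a, b)) : EdgeBtw n D a b := by
  unfold EdgeBtw; rwa [min_eq_left h.le, max_eq_right h.le]

lemma keyB (n : ℕ) (D : Set (ℕ × ℕ)) (hD : Dissection n D) (hF : DiagFramed n D)
    (e f x y : ℕ) (hef : (e, f) ∈ D) (hx : x < y)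
    (hEdge : EdgeBtw n D x y) (hc : Cross (e, f) (x, y)) :
    EdgeBtw n D e x ∧ EdgeBtw n D e y ∧ EdgeBtw n D f x ∧ EdgeBtw n D f y := by
  obtain ⟨he1, he2, he3, he4⟩ := hD _ hef
  simp only [Cross] at hc
  have hEdge' : EdgeOf n D (x, y) := by
    unfold EdgeBtw at hEdge
    rwa [min_eq_left hx.le, max_eq_right hx.le] at hEdge
  have hxy : (x, y) ∈ D := by
    cases hEdge' with
    | inl h => exact h
    | inr h =>
      exfalso
      rcases h with ⟨h1, h2, h3⟩ | ⟨h1, h2⟩ <;> omega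
  rcases hc with ⟨a, b, c⟩ | ⟨a, b, c⟩
  · obtain ⟨E1, E2, E3, E4⟩ := hF e x f y a b c hef hxy
    exact ⟨edgeBtw_of_lt a E1, edgeBtw_of_lt (by omega) E4,
      edgeBtw_symm (edgeBtw_of_lt b E2), edgeBtw_of_lt c E3⟩
  · obtain ⟨E1, E2, E3, E4⟩ := hF x e y f a b c hxy hef
    exact ⟨edgeBtw_symm (edgeBtw_of_lt a E1), edgeBtw_of_lt b E2,
      edgeBtw_symm (edgeBtw_of_lt (by omega) E4), edgeBtw_symm (edgeBtw_of_lt c E3)⟩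

/-- in a diagonally framed dissection of a convex n-gon, if the graph of
the dissection is complete on a vertex set V and a diagonal (e,f) of the dissection
crosses an edge with both endpoints in V, then the graph of the dissection is complete
on V together with e and f. -/
theorem crossing_diagonal_complete (n : ℕ) (D : Set (ℕ × ℕ))
    (hD : Dissection n D) (hF : DiagFramed n D)
    (V : Finset ℕ) (hV : ∀ v ∈ V, 1 ≤ v ∧ v ≤ n)
    (hcomp : ∀ u ∈ V, ∀ v ∈ V, u ≠ v → EdgeBtw n D u v)
    (e f : ℕ) (hef : (e, f) ∈ D)
    (hcross : ∃ u ∈ V, ∃ v ∈ V, u < v ∧ Cross (e, f) (u, v)) :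
    ∀ u ∈ insert e (insert f V), ∀ v ∈ insert e (insert f V),
      u ≠ v → EdgeBtw n D u v := by
  obtain ⟨u, hu, v, hv, huv, hc⟩ := hcross
  obtain ⟨he1, he2, he3, he4⟩ := hD _ hef
  have hefE : EdgeBtw n D e f := edgeBtw_of_lt (by omega) (Or.inl hef)
  have huvE : EdgeBtw n D u v := hcomp u hu v hv huv.ne
  have hmain := keyB n D hD hF e f u v hef huv huvE hc
  have hc' := hc
  simp only [Cross] at hc'
  have claim : ∀ w ∈ V, (w ≠ e → EdgeBtw n D e w) ∧ (w ≠ f → EdgeBtw n D f w) := by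
    intro w hw
    by_cases hwe : w = e
    · subst hwe
      exact ⟨fun h => absurd rfl h, fun _ => edgeBtw_symm hefE⟩
    by_cases hwf : w = f
    · subst hwf
      exact ⟨fun _ => hefE, fun h => absurd rfl h⟩
    by_cases hwu : w = u
    · subst hwu; exact ⟨fun _ => hmain.1, fun _ => hmain.2.2.1⟩
    by_cases hwv : w = v
    · subst hwv; exact ⟨fun _ => hmain.2.1, fun _ => hmain.2.2.2⟩
    rcases hc' with ⟨a, b, c⟩ | ⟨a, b, c⟩
    · -- e < u < f < v
      rcases lt_trichotomy w e with h1 | h1 | h1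
      · -- w < e : cross (e,f) (w,u)
        have := keyB n D hD hF e f w u hef (by omega)
          (hcomp w hw u hu (by omega)) (Or.inr (by simp; omega))
        exact ⟨fun _ => this.1, fun _ => this.2.2.1⟩
      · exact absurd h1 hwe
      · rcases lt_trichotomy w f with h2 | h2 | h2
        · -- e < w < f : cross (e,f) (w,v)
          have := keyB n D hD hF e f w v hef (by omega)
            (hcomp w hw v hv (by omega)) (Or.inl (by simp; omega))
          exact ⟨fun _ => this.1, fun _ => this.2.2.1⟩
        · exact absurd h2 hwf
        · -- f < w : cross (e,f) (u,w)
          have := keyB n D hD hF e f u w hef (by omega)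
            (hcomp u hu w hw (by omega)) (Or.inl (by simp; omega))
          exact ⟨fun _ => this.2.1, fun _ => this.2.2.2⟩
    · -- u < e < v < f
      rcases lt_trichotomy w e with h1 | h1 | h1
      · -- w < e : cross (e,f) (w,v)
        have := keyB n D hD hF e f w v hef (by omega)
          (hcomp w hw v hv (by omega)) (Or.inr (by simp; omega))
        exact ⟨fun _ => this.1, fun _ => this.2.2.1⟩
      · exact absurd h1 hwe
      · rcases lt_trichotomy w f with h2 | h2 | h2
        · -- e < w < f : cross (e,f) (u,w)
          have := keyB n D hD hF e f u w hef (by omega)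
            (hcomp u hu w hw (by omega)) (Or.inr (by simp; omega))
          exact ⟨fun _ => this.2.1, fun _ => this.2.2.2⟩
        · exact absurd h2 hwf
        · -- f < w : cross (e,f) (v,w)
          have := keyB n D hD hF e f v w hef (by omega)
            (hcomp v hv w hw (by omega)) (Or.inl (by simp; omega))
          exact ⟨fun _ => this.2.1, fun _ => this.2.2.2⟩
  intro a ha b hb hne
  simp only [Finset.mem_insert] at ha hb
  rcases ha with rfl | rfl | ha <;> rcases hb with rfl | rfl | hb
  · exact absurd rfl hne
  · exact hefE
  · exact (claim b hb).1 (Ne.symm hne)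
  · exact edgeBtw_symm hefE
  · exact absurd rfl hne
  · exact (claim b hb).2 (Ne.symm hne)
  · exact edgeBtw_symm ((claim a ha).1 hne)
  · exact edgeBtw_symm ((claim a ha).2 hne)
  · exact hcomp a ha b hb hne
end

section
/- A triangle occurs in Φ(P(π)) if and only if π has an interval expressible as a direct sum p₁ ⊕ p₂ or skew sum p₁ ⊖ p₂ of two nonempty patterns; that is, Φ(P(π)) contains three vertices a < b < c pairwise joined by chords/outer edges if and only if π has intervals [a,b-1], [b,c-1], and [a,c-1]. Consequently, π is block-wise simple if and only if Φ(P(π)) contains no triangle face. -/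
/-- The interval poset of π encoded by endpoint pairs: (a,b) with 1 ≤ a ≤ b ≤ n such
that [a,b] is an interval of π. -/
def PosetPairs (n : ℕ) (π : Equiv.Perm (Fin n)) : Set (ℕ × ℕ) :=
  {p | 1 ≤ p.1 ∧ p.1 ≤ p.2 ∧ p.2 ≤ n ∧ IsInterval π (ivl n p.1 p.2)}

/-- The set of interval posets (so encoded) with n minimal elements. -/
def IntervalPosets (n : ℕ) : Set (Set (ℕ × ℕ)) :=
  {P | ∃ π : Equiv.Perm (Fin n), P = PosetPairs n π}

/-- Φ sends each non-minimal (non-singleton) and non-maximal element [a,b] of the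
poset to the diagonal (a, b+1) of the convex (n+1)-gon. -/
def Phi (n : ℕ) (P : Set (ℕ × ℕ)) : Set (ℕ × ℕ) :=
  {q | ∃ a b : ℕ, (a, b) ∈ P ∧ a < b ∧ ¬ (a = 1 ∧ b = n) ∧ q = (a, b + 1)}

/-- No diagonal of D passes through the interior of the quadrilateral a < b < c < d. -/
def NoDiagInsideQuad (D : Set (ℕ × ℕ)) (a b c d : ℕ) : Prop :=
  ¬ ∃ p ∈ D, Cross p (a, b) ∨ Cross p (b, c) ∨ Cross p (c, d) ∨ Cross p (a, d) ∨
      p = (a, c) ∨ p = (b, d)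

/-- The dissection D of the convex m-gon has a quadrilateral face. -/
def HasQuadFace (m : ℕ) (D : Set (ℕ × ℕ)) : Prop :=
  ∃ a b c d : ℕ, 1 ≤ a ∧ a < b ∧ b < c ∧ c < d ∧ d ≤ m ∧
    EdgeOf m D (a, b) ∧ EdgeOf m D (b, c) ∧ EdgeOf m D (c, d) ∧ EdgeOf m D (a, d) ∧
    NoDiagInsideQuad D a b c d

/-- The chord (a,b) is a chord of the dissection Φ(P(π)) or an outer edge of the
convex (n+1)-gon. -/
def ChordOrOuter (n : ℕ) (π : Equiv.Perm (Fin n)) (a b : ℕ) : Prop :=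
  (a, b) ∈ Phi n (PosetPairs n π) ∨ OuterEdge (n + 1) (a, b)

/-- π is block-wise simple: no interval of π is the disjoint union of two nonempty
intervals of π. -/
def BlockwiseSimple {n : ℕ} (π : Equiv.Perm (Fin n)) : Prop :=
  ¬ ∃ I K : Finset (Fin n), IsInterval π I ∧ IsInterval π K ∧ IsInterval π (K \ I) ∧
    I.Nonempty ∧ (K \ I).Nonempty ∧ I ⊂ K


/-!
A chord `(a, b)` of the `(n+1)`-gon, outer edges included, is present exactly when `[a, b-1]`
is an interval of `π`: outer edges `(a, a+1)` and `(1, n+1)` correspond to the trivial intervals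
(singletons and `[1, n]`) that `Φ` leaves out. So a triangle `a < b < c` is the same thing as
three intervals `[a, b-1]`, `[b, c-1]`, `[a, c-1]`. Conversely, in a decomposition `K = I ⊔ (K \ I)`
into intervals, `I` and `K \ I` are disjoint integer intervals whose union is an integer interval,
so they are adjacent, and their endpoints give such a triple.
-/

section

variable {n : ℕ}

lemma mem_ivl {a b : ℕ} {x : Fin n} : x ∈ ivl n a b ↔ a ≤ x.val + 1 ∧ x.val + 1 ≤ b := by
  simp [ivl]

lemma ivl_union_ivl {a b d : ℕ} (hab : a ≤ b + 1) (hbd : b ≤ d) :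
    ivl n a b ∪ ivl n (b + 1) d = ivl n a d := by
  ext x
  simp only [Finset.mem_union, mem_ivl]
  omega

lemma ivl_one_eq_univ : ivl n 1 n = Finset.univ := by
  ext x
  simp only [mem_ivl, Finset.mem_univ, iff_true]
  omega

lemma consec_of_subsingleton {S : Finset (Fin n)} (hS : (S : Set (Fin n)).Subsingleton) :
    Consec S := by
  intro x y z hx hz hxy hyz
  obtain rfl : x = z := hS hx hz
  rwa [le_antisymm hxy hyz] at hx

lemma Consec.exists_eq_ivl {S : Finset (Fin n)} (hS : Consec S) (hne : S.Nonempty) :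
    ∃ a b, 1 ≤ a ∧ a ≤ b ∧ b ≤ n ∧ S = ivl n a b := by
  have hle : (S.min' hne).val ≤ (S.max' hne).val := S.min'_le_max' hne
  refine ⟨(S.min' hne).val + 1, (S.max' hne).val + 1, by omega, by omega, (S.max' hne).isLt, ?_⟩
  ext x
  rw [mem_ivl]
  refine ⟨fun hx => ?_, fun hx => hS (S.min'_mem hne) (S.max'_mem hne) ?_ ?_⟩
  · have h₁ : (S.min' hne).val ≤ x.val := S.min'_le x hx
    have h₂ : x.val ≤ (S.max' hne).val := S.le_max' x hx
    omega
  all_goals simp only [Fin.le_def]; omega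

lemma lt_or_lt_of_disjoint_ivl {a b c d : ℕ} (h : Disjoint (ivl n a b) (ivl n c d))
    (ha : 1 ≤ a) (hab : a ≤ b) (hb : b ≤ n) (hcd : c ≤ d) (hd : d ≤ n) : b < c ∨ d < a := by
  by_contra! hlt
  have hx : (⟨max a c - 1, by omega⟩ : Fin n) ∈ ivl n a b := by simp only [mem_ivl]; omega
  exact Finset.disjoint_left.mp h hx (by simp only [mem_ivl]; omega)

/-- The element of value `b + 1` lies between the two blocks, hence in the second one. -/
lemma Consec.eq_succ_of_union_ivl {a b c d : ℕ} (h : Consec (ivl n a b ∪ ivl n c d))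
    (ha : 1 ≤ a) (hab : a ≤ b) (hbc : b < c) (hcd : c ≤ d) (hd : d ≤ n) : c = b + 1 := by
  have hmem : (⟨b, by omega⟩ : Fin n) ∈ ivl n a b ∪ ivl n c d :=
    h (x := ⟨a - 1, by omega⟩) (z := ⟨c - 1, by omega⟩)
      (Finset.mem_union_left _ (by simp only [mem_ivl]; omega))
      (Finset.mem_union_right _ (by simp only [mem_ivl]; omega))
      (by simp only [Fin.le_def]; omega) (by simp only [Fin.le_def]; omega)
  simp only [Finset.mem_union, mem_ivl] at hmem
  omega

variable (π : Equiv.Perm (Fin n))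

lemma isInterval_ivl_self (a : ℕ) : IsInterval π (ivl n a a) := by
  have hsub : (ivl n a a : Set (Fin n)).Subsingleton := fun x hx y hy => by
    rw [Finset.mem_coe, mem_ivl] at hx hy
    exact Fin.ext (by omega)
  refine ⟨consec_of_subsingleton hsub, consec_of_subsingleton ?_⟩
  rw [Finset.coe_image]
  exact hsub.image _

lemma isInterval_univ : IsInterval π Finset.univ := by
  refine ⟨fun _ y _ _ _ _ _ => Finset.mem_univ y, ?_⟩
  rw [Finset.image_univ_equiv]
  exact fun _ y _ _ _ _ _ => Finset.mem_univ y

lemma chordOrOuter_iff_isInterval {a b : ℕ} (ha : 1 ≤ a) (hab : a < b) (hb : b ≤ n + 1) :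
    ChordOrOuter n π a b ↔ IsInterval π (ivl n a (b - 1)) := by
  constructor
  · rintro (⟨a', b', ⟨-, -, -, hI⟩, -, -, heq⟩ | ⟨-, hsucc, -⟩ | ⟨hone, hlast⟩)
    · obtain ⟨rfl, rfl⟩ : a' = a ∧ b' = b - 1 := by rw [Prod.mk.injEq] at heq; omega
      exact hI
    · obtain rfl : b = a + 1 := hsucc
      simpa using isInterval_ivl_self π a
    · obtain ⟨rfl, rfl⟩ : a = 1 ∧ b = n + 1 := ⟨hone, hlast⟩
      simpa [ivl_one_eq_univ] using isInterval_univ π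
  · intro hI
    by_cases hsucc : b = a + 1
    · exact Or.inr (Or.inl ⟨ha, hsucc, hb⟩)
    by_cases hfull : a = 1 ∧ b = n + 1
    · exact Or.inr (Or.inr hfull)
    refine Or.inl ⟨a, b - 1, ⟨ha, by omega, by omega, hI⟩, by omega, by omega, ?_⟩
    rw [Nat.sub_add_cancel (by omega)]

lemma exists_split_of_adjacent {a b d : ℕ} (ha : 1 ≤ a) (hab : a ≤ b) (hbd : b < d)
    (hd : d ≤ n) (hI : IsInterval π (ivl n a b)) (hJ : IsInterval π (ivl n (b + 1) d))
    (hK : IsInterval π (ivl n a b ∪ ivl n (b + 1) d)) :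
    ∃ a b c : ℕ, 1 ≤ a ∧ a < b ∧ b < c ∧ c ≤ n + 1 ∧
      IsInterval π (ivl n a (b - 1)) ∧ IsInterval π (ivl n b (c - 1)) ∧
      IsInterval π (ivl n a (c - 1)) := by
  rw [ivl_union_ivl (by omega) hbd.le] at hK
  exact ⟨a, b + 1, d + 1, ha, by omega, by omega, by omega,
    by simpa using hI, by simpa using hJ, by simpa using hK⟩

lemma exists_interval_split_iff :
    (∃ I K : Finset (Fin n), IsInterval π I ∧ IsInterval π K ∧ IsInterval π (K \ I) ∧
      I.Nonempty ∧ (K \ I).Nonempty ∧ I ⊂ K) ↔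
    ∃ a b c : ℕ, 1 ≤ a ∧ a < b ∧ b < c ∧ c ≤ n + 1 ∧
      IsInterval π (ivl n a (b - 1)) ∧ IsInterval π (ivl n b (c - 1)) ∧
      IsInterval π (ivl n a (c - 1)) := by
  constructor
  · rintro ⟨I, K, hI, hK, hJ, hIne, hJne, hIK⟩
    have hdisj : Disjoint I (K \ I) := Finset.disjoint_sdiff
    rw [← Finset.union_sdiff_of_subset hIK.subset] at hK
    obtain ⟨a, b, ha, hab, hb, rfl⟩ := hI.1.exists_eq_ivl hIne
    obtain ⟨c, d, hc, hcd, hd, hJeq⟩ := hJ.1.exists_eq_ivl hJne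
    rw [hJeq] at hJ hK hdisj
    rcases lt_or_lt_of_disjoint_ivl hdisj ha hab hb hcd hd with hbc | hda
    · obtain rfl := hK.1.eq_succ_of_union_ivl ha hab hbc hcd hd
      exact exists_split_of_adjacent π ha hab (by omega) hd hI hJ hK
    · rw [Finset.union_comm] at hK
      obtain rfl := hK.1.eq_succ_of_union_ivl hc hcd hda hab hb
      exact exists_split_of_adjacent π hc hcd (by omega) hb hJ hI hK
  · rintro ⟨a, b, c, ha, hab, hbc, hc, hI, hJ, hK⟩
    have hsdiff : ivl n a (c - 1) \ ivl n a (b - 1) = ivl n b (c - 1) := by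
      ext x
      simp only [Finset.mem_sdiff, mem_ivl]
      omega
    have hJne : (ivl n b (c - 1)).Nonempty := ⟨⟨b - 1, by omega⟩, by simp only [mem_ivl]; omega⟩
    refine ⟨ivl n a (b - 1), ivl n a (c - 1), hI, hK, hsdiff ▸ hJ,
      ⟨⟨a - 1, by omega⟩, by simp only [mem_ivl]; omega⟩, hsdiff ▸ hJne, ?_⟩
    refine ssubset_iff_subset_not_subset.mpr ⟨fun x hx => ?_, Finset.sdiff_nonempty.mp ?_⟩
    · rw [mem_ivl] at hx ⊢
      omega
    · rwa [hsdiff]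

end

/-- three vertices a < b < c of the convex (n+1)-gon are pairwise joined
by chords of Φ(P(π)) or outer edges iff [a,b-1], [b,c-1] and [a,c-1] are intervals of
π; consequently π is block-wise simple iff Φ(P(π)) contains no triangle. -/
theorem triangle_iff_sum_interval (n : ℕ) (π : Equiv.Perm (Fin n)) :
    (∀ a b c : ℕ, 1 ≤ a → a < b → b < c → c ≤ n + 1 →
      ((ChordOrOuter n π a b ∧ ChordOrOuter n π b c ∧ ChordOrOuter n π a c) ↔
        (IsInterval π (ivl n a (b - 1)) ∧ IsInterval π (ivl n b (c - 1)) ∧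
          IsInterval π (ivl n a (c - 1))))) ∧
    (BlockwiseSimple π ↔
      ¬ ∃ a b c : ℕ, 1 ≤ a ∧ a < b ∧ b < c ∧ c ≤ n + 1 ∧
        ChordOrOuter n π a b ∧ ChordOrOuter n π b c ∧ ChordOrOuter n π a c) := by
  have triangle : ∀ a b c : ℕ, 1 ≤ a → a < b → b < c → c ≤ n + 1 →
      ((ChordOrOuter n π a b ∧ ChordOrOuter n π b c ∧ ChordOrOuter n π a c) ↔
        (IsInterval π (ivl n a (b - 1)) ∧ IsInterval π (ivl n b (c - 1)) ∧
          IsInterval π (ivl n a (c - 1)))) := fun a b c ha hab hbc hc => by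
    rw [chordOrOuter_iff_isInterval π ha hab (by omega),
      chordOrOuter_iff_isInterval π (by omega) hbc hc,
      chordOrOuter_iff_isInterval π ha (by omega) hc]
  refine ⟨triangle, not_congr ?_⟩
  rw [exists_interval_split_iff]
  exact exists₃_congr fun a b c => and_congr_right fun ha => and_congr_right fun hab =>
    and_congr_right fun hbc => and_congr_right fun hc => (triangle a b c ha hab hbc hc).symm
end
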